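/- Let n ≥ 2, 0 < σ < 2, λ ∈ ℝ, and let W ∈ C^{1,1}_loc(ℝⁿ) ∩ L_σ be anti-symmetric about T_λ, i.e. W(x^λ) = -W(x) for all x ∈ ℝⁿ. Suppose W attains its minimum over Σ_λ at a point x̄ ∈ Σ_λ with W(x̄) < 0. Then (-Δ)^{σ/2}W(x̄) ≤ 2 C_{n,σ} W(x̄) ∫_{Σ_λ} |x̄ - y^λ|^{-(n+σ)} dy, and in particular (-Δ)^{σ/2}W(x̄) < 0. -/

import Mathlib

open MeasureTheory Filter Metric Set Bornology

noncomputable section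

/-- The space `ℝⁿ`. -/
abbrev En (n : ℕ) := EuclideanSpace ℝ (Fin n)

/-- Membership in the weighted space `L_σ`. -/
def MemL (n : ℕ) (σ : ℝ) (w : En n → ℝ) : Prop :=
  LocallyIntegrable w volume ∧
    Integrable (fun x : En n => |w x| / (1 + ‖x‖ ^ ((n : ℝ) + σ))) volume

/-- `C^{1,1}_loc` on an open set `Ω`: near every point of `Ω`, `w` is
differentiable with Lipschitz-continuous derivative. -/
def C11locOn (n : ℕ) (Ω : Set (En n)) (w : En n → ℝ) : Prop :=
  ∀ x ∈ Ω, ∃ ε > 0, ∃ K : NNReal, ball x ε ⊆ Ω ∧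
    (∀ y ∈ ball x ε, DifferentiableAt ℝ w y) ∧
    LipschitzOnWith K (fderiv ℝ w) (ball x ε)

/-- `C^{1,1}_loc` on all of `ℝⁿ`. -/
def C11loc (n : ℕ) (w : En n → ℝ) : Prop := C11locOn n univ w

/-- `HasFracLap n σ c w x L` : the fractional Laplacian `(-Δ)^{σ/2} w`, with
normalization constant `c = C_{n,σ} > 0`, exists at `x` as a principal value
and is equal to `L`. -/
def HasFracLap (n : ℕ) (σ c : ℝ) (w : En n → ℝ) (x : En n) (L : ℝ) : Prop :=
  Tendsto
    (fun ε : ℝ => c * ∫ y in {y : En n | ε ≤ dist x y},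
        (w x - w y) / dist x y ^ ((n : ℝ) + σ))
    (nhdsWithin 0 (Ioi 0)) (nhds L)

/-- Reflection `x ↦ x^λ` about the hyperplane `T_λ = {x : x₁ = λ}`. -/
def reflPt (n : ℕ) [NeZero n] (l : ℝ) (x : En n) : En n :=
  WithLp.toLp 2 (fun i => if i = 0 then 2 * l - x 0 else x i)

/-- The half space `Σ_λ = {x : x₁ < λ}`. -/
def halfSpace (n : ℕ) [NeZero n] (l : ℝ) : Set (En n) := {x | x 0 < l}

/-!
Split the truncated integral `∫_{|x̄ - y| ≥ ε} (W x̄ - W y) / |x̄ - y|^{n+σ} dy` along `T_λ` and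
move the part outside `Σ_λ` into `Σ_λ` by the reflection, where anti-symmetry turns its numerator
into `W x̄ + W y`. On the part inside `Σ_λ` the numerator `W x̄ - W y` is nonpositive by
minimality, so the kernel may be replaced by the smaller reflected kernel `|x̄ - y^λ|^{-(n+σ)}`.
The two pieces then add up, as `ε → 0`, to `2 W x̄ ∫_{Σ_λ} |x̄ - y^λ|^{-(n+σ)} dy`; this integral
is finite and positive because `|x̄ - y^λ| ≥ λ - x̄₁ > 0` for `y ∈ Σ_λ`.
-/

open Topology

section WeightedKernel

variable {E : Type*} [NormedAddCommGroup E]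

lemma one_add_rpow_le_two_rpow_mul {p t : ℝ} (hp : 0 ≤ p) (ht : 0 ≤ t) :
    (1 + t) ^ p ≤ 2 ^ p * (1 + t ^ p) := by
  have hmax : max 1 t ^ p ≤ 1 + t ^ p := by
    rcases le_total 1 t with h | h
    · rw [max_eq_right h]; linarith
    · rw [max_eq_left h, Real.one_rpow]; linarith [Real.rpow_nonneg ht p]
  calc (1 + t) ^ p ≤ (2 * max 1 t) ^ p := by
        gcongr; linarith [le_max_left 1 t, le_max_right 1 t]
    _ = 2 ^ p * max 1 t ^ p := Real.mul_rpow zero_le_two (by positivity)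
    _ ≤ 2 ^ p * (1 + t ^ p) := by gcongr

lemma one_add_norm_rpow_div_dist_rpow_le {p ε : ℝ} (hp : 0 ≤ p) (hε : 0 < ε) {x y : E}
    (hy : ε ≤ dist x y) : (1 + ‖y‖ ^ p) / dist x y ^ p ≤ 1 / ε ^ p + (‖x‖ / ε + 1) ^ p := by
  have hd : 0 < dist x y := hε.trans_le hy
  have hy_le : ‖y‖ / dist x y ≤ ‖x‖ / ε + 1 :=
    calc ‖y‖ / dist x y ≤ (‖x‖ + dist x y) / dist x y := by
          gcongr; rw [dist_comm, dist_eq_norm]; exact norm_le_norm_add_norm_sub' y x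
      _ = ‖x‖ / dist x y + 1 := by field_simp
      _ ≤ ‖x‖ / ε + 1 := by gcongr
  rw [add_div, ← Real.div_rpow (norm_nonneg y) hd.le]
  gcongr

variable [MeasurableSpace E] [BorelSpace E] {μ : Measure E}

lemma integrable_one_div_one_add_norm_rpow [NormedSpace ℝ E] [FiniteDimensional ℝ E]
    [μ.IsAddHaarMeasure] {p : ℝ} (hp : (Module.finrank ℝ E : ℝ) < p) :
    Integrable (fun y : E => 1 / (1 + ‖y‖ ^ p)) μ := by
  have hp0 : 0 ≤ p := (Nat.cast_nonneg _).trans hp.le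
  refine ((integrable_one_add_norm hp).const_mul (2 ^ p)).mono'
    (Measurable.aestronglyMeasurable (by fun_prop)) (Eventually.of_forall fun y => ?_)
  rw [Real.norm_of_nonneg (by positivity), Real.rpow_neg (by positivity), ← div_eq_mul_inv,
    div_le_div_iff₀ (by positivity) (by positivity), one_mul]
  exact one_add_rpow_le_two_rpow_mul hp0 (norm_nonneg y)

lemma integrableOn_div_dist_rpow {p ε : ℝ} (hp : 0 ≤ p) (hε : 0 < ε) {f : E → ℝ}
    (hfm : AEStronglyMeasurable f μ) (hf : Integrable (fun y => |f y| / (1 + ‖y‖ ^ p)) μ)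
    (x : E) : IntegrableOn (fun y => f y / dist x y ^ p) {y | ε ≤ dist x y} μ := by
  have hS : MeasurableSet {y | ε ≤ dist x y} := measurableSet_le measurable_const (by fun_prop)
  refine ((hf.const_mul (1 / ε ^ p + (‖x‖ / ε + 1) ^ p)).restrict).mono'
    (hfm.restrict.mul (Measurable.aestronglyMeasurable (by fun_prop)))
    ((ae_restrict_iff' hS).2 (Eventually.of_forall fun y hy => ?_))
  have hd : 0 < dist x y ^ p := Real.rpow_pos_of_pos (hε.trans_le hy) p
  calc ‖f y / dist x y ^ p‖ = (1 + ‖y‖ ^ p) / dist x y ^ p * (|f y| / (1 + ‖y‖ ^ p)) := by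
        rw [Real.norm_eq_abs, abs_div, abs_of_pos hd]; field_simp
    _ ≤ _ := by gcongr; exact one_add_norm_rpow_div_dist_rpow_le hp hε hy

lemma integrableOn_one_div_dist_rpow [NormedSpace ℝ E] [FiniteDimensional ℝ E]
    [μ.IsAddHaarMeasure] {p ε : ℝ} (hp : (Module.finrank ℝ E : ℝ) < p) (hε : 0 < ε) (x : E) :
    IntegrableOn (fun y => 1 / dist x y ^ p) {y | ε ≤ dist x y} μ :=
  integrableOn_div_dist_rpow ((Nat.cast_nonneg _).trans hp.le) hε aestronglyMeasurable_const
    (by simpa using integrable_one_div_one_add_norm_rpow hp) x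

lemma tendsto_setIntegral_inter_dist_ge [NullSingletonClass μ] {f : E → ℝ} {s : Set E}
    (hf : IntegrableOn f s μ) (x : E) :
    Tendsto (fun ε => ∫ y in s ∩ {y | ε ≤ dist x y}, f y ∂μ) (𝓝[>] 0)
      (𝓝 (∫ y in s, f y ∂μ)) := by
  have hS : ∀ ε, MeasurableSet {y | ε ≤ dist x y} := fun ε =>
    measurableSet_le measurable_const (by fun_prop)
  simp_rw [← setIntegral_indicator (hS _)]
  refine tendsto_integral_filter_of_dominated_convergence (fun y => ‖f y‖)
    (Eventually.of_forall fun ε => hf.aestronglyMeasurable.indicator (hS ε))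
    (Eventually.of_forall fun ε => ae_of_all _ (norm_indicator_le_norm_self f)) hf.norm ?_
  have hx : ∀ᵐ y ∂μ.restrict s, y ≠ x :=
    ae_restrict_of_ae (compl_mem_ae_iff.2 (measure_singleton x))
  filter_upwards [hx] with y hy
  refine tendsto_const_nhds.congr' ?_
  filter_upwards [Ioo_mem_nhdsGT (dist_pos.2 hy.symm)] with ε hε
  exact (indicator_of_mem (show y ∈ {y | ε ≤ dist x y} from hε.2.le) f).symm

end WeightedKernel

section Reflection

variable {n : ℕ}

lemma volume_setOf_apply_eq (i : Fin n) (a : ℝ) : volume {y : En n | y i = a} = 0 := by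
  rw [← (PiLp.volume_preserving_toLp (Fin n)).measure_preimage
    (measurableSet_eq_fun (by fun_prop) measurable_const).nullMeasurableSet]
  exact Measure.pi_hyperplane (α := fun _ : Fin n => ℝ) (fun _ => volume) i a

variable [NeZero n] {l : ℝ}

@[simp] lemma reflPt_apply_zero (x : En n) : reflPt n l x 0 = 2 * l - x 0 := by simp [reflPt]

lemma reflPt_apply_of_ne (x : En n) {i : Fin n} (hi : i ≠ 0) : reflPt n l x i = x i := by
  simp [reflPt, hi]

lemma reflPt_involutive : Function.Involutive (reflPt n l) := by
  intro x; ext i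
  by_cases hi : i = 0
  · subst hi; simp
  · simp only [reflPt_apply_of_ne _ hi]

lemma measurePreserving_reflPt : MeasurePreserving (reflPt n l) := by
  let f : Fin n → ℝ → ℝ := fun i t => if i = 0 then 2 * l - t else t
  have hf : ∀ i, MeasurePreserving (f i) := fun i => by
    by_cases hi : i = 0
    · simpa [f, hi] using Measure.measurePreserving_sub_left volume (2 * l)
    · simp only [f, hi, if_false]; exact MeasurePreserving.id volume
  convert (PiLp.volume_preserving_toLp (Fin n)).comp
    ((volume_preserving_pi hf).comp (PiLp.volume_preserving_ofLp (Fin n))) using 1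
  funext x; ext i
  by_cases hi : i = 0
  · subst hi; simp [f]
  · simp [f, hi, reflPt_apply_of_ne _ hi]

lemma measurableEmbedding_reflPt : MeasurableEmbedding (reflPt n l) :=
  (MeasurableEquiv.ofInvolutive _ reflPt_involutive
    measurePreserving_reflPt.measurable).measurableEmbedding

lemma sub_le_dist_reflPt (x : En n) {y : En n} (hy : y 0 ≤ l) :
    l - x 0 ≤ dist x (reflPt n l y) :=
  calc l - x 0 ≤ (2 * l - y 0) - x 0 := by linarith
    _ ≤ dist (x 0) (reflPt n l y 0) := by
        rw [reflPt_apply_zero, Real.dist_eq, abs_sub_comm]; exact le_abs_self _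
    _ ≤ dist x (reflPt n l y) := PiLp.dist_apply_le _ _ _

lemma dist_le_dist_reflPt {x y : En n} (hx : x 0 ≤ l) (hy : y 0 ≤ l) :
    dist x y ≤ dist x (reflPt n l y) := by
  rw [EuclideanSpace.dist_eq, EuclideanSpace.dist_eq]
  gcongr with i
  by_cases hi : i = 0
  · subst hi
    rw [reflPt_apply_zero, Real.dist_eq, Real.dist_eq, abs_sub_comm (x 0) (2 * l - y 0),
      abs_of_nonneg (show 0 ≤ 2 * l - y 0 - x 0 by linarith)]
    exact abs_le.2 ⟨by linarith, by linarith⟩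
  · rw [reflPt_apply_of_ne _ hi]

lemma isOpen_halfSpace : IsOpen (halfSpace n l) := isOpen_lt (by fun_prop) continuous_const

lemma setOf_apply_zero_le_ae_eq_halfSpace : {y : En n | y 0 ≤ l} =ᵐ[volume] halfSpace n l := by
  refine ae_eq_set.2 ⟨measure_mono_null (fun y hy => ?_) (volume_setOf_apply_eq 0 l), ?_⟩
  · exact le_antisymm hy.1 (not_lt.1 hy.2)
  · have hsub : halfSpace n l ⊆ {y : En n | y 0 ≤ l} :=
      fun y (hy : y 0 < l) => hy.le
    rw [sdiff_eq_empty.2 hsub, measure_empty]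

lemma preimage_reflPt_dist_ge_diff_halfSpace {x : En n} {ε : ℝ} (hε : ε ≤ l - x 0) :
    reflPt n l ⁻¹' ({y | ε ≤ dist x y} \ halfSpace n l) = {y | y 0 ≤ l} := by
  ext y
  simp only [mem_preimage, Set.mem_sdiff, mem_ofPred_eq, halfSpace, reflPt_apply_zero, not_lt]
  exact ⟨fun h => by linarith [h.2], fun h => ⟨hε.trans (sub_le_dist_reflPt x h), by linarith⟩⟩

lemma integrableOn_halfSpace_comp_reflPt {x : En n} {ε : ℝ} (hε : ε ≤ l - x 0) {f : En n → ℝ}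
    (hf : IntegrableOn f ({y | ε ≤ dist x y} \ halfSpace n l)) :
    IntegrableOn (fun y => f (reflPt n l y)) (halfSpace n l) := by
  have h := ((measurePreserving_reflPt (l := l)).integrableOn_comp_preimage
    measurableEmbedding_reflPt).2 hf
  rw [preimage_reflPt_dist_ge_diff_halfSpace hε] at h
  exact h.congr_set_ae setOf_apply_zero_le_ae_eq_halfSpace.symm

lemma setIntegral_dist_ge_diff_halfSpace {x : En n} {ε : ℝ} (hε : ε ≤ l - x 0) (f : En n → ℝ) :
    ∫ y in {y | ε ≤ dist x y} \ halfSpace n l, f y =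
      ∫ y in halfSpace n l, f (reflPt n l y) := by
  rw [← (measurePreserving_reflPt (l := l)).setIntegral_preimage_emb measurableEmbedding_reflPt,
    preimage_reflPt_dist_ge_diff_halfSpace hε]
  exact setIntegral_congr_set setOf_apply_zero_le_ae_eq_halfSpace

end Reflection

section AntisymmetricMinimum

variable {n : ℕ} {W : En n → ℝ}

lemma MemL.integrableOn_sub_div_dist_rpow {σ : ℝ} (hW : MemL n σ W) (hσ : 0 < σ) (c : ℝ)
    (x : En n) {ε : ℝ} (hε : 0 < ε) :
    IntegrableOn (fun y => (c - W y) / dist x y ^ ((n : ℝ) + σ)) {y | ε ≤ dist x y} := by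
  have hp : (Module.finrank ℝ (En n) : ℝ) < n + σ := by
    rw [finrank_euclideanSpace_fin]; linarith
  simp_rw [sub_div, ← mul_one_div c]
  exact ((integrableOn_one_div_dist_rpow hp hε x).const_mul c).sub
    (integrableOn_div_dist_rpow (by positivity) hε hW.1.aestronglyMeasurable hW.2 x)

variable [NeZero n] {lam : ℝ} {xb : En n}

lemma setIntegral_dist_ge_le_of_antisymm (hW_anti : ∀ x, W (reflPt n lam x) = -W x)
    (hxb : xb ∈ halfSpace n lam) (hmin : ∀ y ∈ halfSpace n lam, W xb ≤ W y) {p ε : ℝ}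
    (hp : 0 ≤ p) (hε : 0 < ε) (hεδ : ε ≤ lam - xb 0)
    (hF : IntegrableOn (fun y => (W xb - W y) / dist xb y ^ p) {y | ε ≤ dist xb y})
    (hG : IntegrableOn (fun y => (W xb - W y) / dist xb (reflPt n lam y) ^ p) (halfSpace n lam)) :
    ∫ y in {y | ε ≤ dist xb y}, (W xb - W y) / dist xb y ^ p ≤
      (∫ y in halfSpace n lam ∩ {y | ε ≤ dist xb y},
          (W xb - W y) / dist xb (reflPt n lam y) ^ p) +
        ∫ y in halfSpace n lam, (W xb + W y) / dist xb (reflPt n lam y) ^ p := by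
  have hS : MeasurableSet {y | ε ≤ dist xb y} := measurableSet_le measurable_const (by fun_prop)
  have hH : MeasurableSet (halfSpace n lam) := isOpen_halfSpace.measurableSet
  rw [← integral_inter_add_sdiff hH hF, setIntegral_dist_ge_diff_halfSpace hεδ, inter_comm]
  refine add_le_add (setIntegral_mono_on (hF.mono_set inter_subset_right)
    (hG.mono_set inter_subset_left) (hH.inter hS) fun y hy => ?_)
    (le_of_eq <| by simp_rw [hW_anti, sub_neg_eq_add])
  have hd : 0 < dist xb y ^ p := Real.rpow_pos_of_pos (hε.trans_le hy.2) p
  have hdd : dist xb y ^ p ≤ dist xb (reflPt n lam y) ^ p :=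
    Real.rpow_le_rpow dist_nonneg (dist_le_dist_reflPt (le_of_lt hxb) (le_of_lt hy.1)) hp
  rw [div_eq_mul_inv, div_eq_mul_inv]
  exact mul_le_mul_of_nonpos_left (inv_anti₀ hd hdd) (sub_nonpos.2 (hmin y hy.1))

lemma integrableOn_halfSpace_one_div_dist_reflPt_rpow (hxb : xb ∈ halfSpace n lam) {p : ℝ}
    (hp : (n : ℝ) < p) :
    IntegrableOn (fun y => 1 / dist xb (reflPt n lam y) ^ p) (halfSpace n lam) :=
  integrableOn_halfSpace_comp_reflPt le_rfl <|
    (integrableOn_one_div_dist_rpow (by rwa [finrank_euclideanSpace_fin]) (sub_pos.2 hxb)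
      xb).mono_set sdiff_subset

lemma MemL.integrableOn_halfSpace_add_div_dist_reflPt_rpow {σ : ℝ} (hW : MemL n σ W)
    (hσ : 0 < σ) (hW_anti : ∀ x, W (reflPt n lam x) = -W x) (hxb : xb ∈ halfSpace n lam) :
    IntegrableOn (fun y => (W xb + W y) / dist xb (reflPt n lam y) ^ ((n : ℝ) + σ))
      (halfSpace n lam) := by
  simpa [hW_anti] using integrableOn_halfSpace_comp_reflPt le_rfl
    ((hW.integrableOn_sub_div_dist_rpow hσ (W xb) xb (sub_pos.2 hxb)).mono_set sdiff_subset)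

lemma setIntegral_one_div_dist_reflPt_rpow_pos (hxb : xb ∈ halfSpace n lam) {p : ℝ}
    (hk : IntegrableOn (fun y => 1 / dist xb (reflPt n lam y) ^ p) (halfSpace n lam)) :
    0 < ∫ y in halfSpace n lam, 1 / dist xb (reflPt n lam y) ^ p := by
  refine (setIntegral_pos_iff_support_of_nonneg_ae (ae_of_all _ fun y => by positivity) hk).2 ?_
  refine (isOpen_halfSpace.measure_pos volume ⟨xb, hxb⟩).trans_le
    (measure_mono fun y hy => ⟨?_, hy⟩)
  have hd : 0 < dist xb (reflPt n lam y) :=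
    (sub_pos.2 hxb).trans_le (sub_le_dist_reflPt xb (le_of_lt hy))
  exact (one_div_pos.2 (Real.rpow_pos_of_pos hd p)).ne'

end AntisymmetricMinimum

theorem statement5_general
    (n : ℕ) [NeZero n]
    (σ : ℝ) (hσ : 0 < σ ∧ σ < 2) (lam : ℝ)
    (cns : ℝ) (hcns : 0 < cns)
    (W : En n → ℝ) (hW_L : MemL n σ W)
    (hW_anti : ∀ x, W (reflPt n lam x) = -W x)
    (xb : En n) (hxb : xb ∈ halfSpace n lam)
    (hmin : ∀ y ∈ halfSpace n lam, W xb ≤ W y) (hneg : W xb < 0) :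
    ∀ L, HasFracLap n σ cns W xb L →
      L ≤ 2 * cns * W xb *
        (∫ y in halfSpace n lam, 1 / dist xb (reflPt n lam y) ^ ((n : ℝ) + σ)) ∧
      L < 0 := by
  intro L hL
  set p : ℝ := n + σ
  set J := ∫ y in halfSpace n lam, 1 / dist xb (reflPt n lam y) ^ p
  have hk := integrableOn_halfSpace_one_div_dist_reflPt_rpow hxb (lt_add_of_pos_right _ hσ.1)
  have hGplus := hW_L.integrableOn_halfSpace_add_div_dist_reflPt_rpow hσ.1 hW_anti hxb
  have hGminus : IntegrableOn (fun y => (W xb - W y) / dist xb (reflPt n lam y) ^ p)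
      (halfSpace n lam) :=
    IntegrableOn.congr_fun ((hk.const_mul (2 * W xb)).sub hGplus)
      (fun y _ => by simp only [Pi.sub_apply]; ring) isOpen_halfSpace.measurableSet
  have hsum : (∫ y in halfSpace n lam, (W xb - W y) / dist xb (reflPt n lam y) ^ p) +
      (∫ y in halfSpace n lam, (W xb + W y) / dist xb (reflPt n lam y) ^ p) = 2 * W xb * J := by
    rw [← integral_add hGminus hGplus, ← integral_const_mul]
    congr 1 with y; ring
  have hlim := ((tendsto_setIntegral_inter_dist_ge hGminus xb).add_const
    (∫ y in halfSpace n lam, (W xb + W y) / dist xb (reflPt n lam y) ^ p)).const_mul cns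
  rw [hsum] at hlim
  have hL_le : L ≤ cns * (2 * W xb * J) := le_of_tendsto_of_tendsto hL hlim <| by
    filter_upwards [Ioc_mem_nhdsGT (sub_pos.2 hxb)] with ε hε
    exact mul_le_mul_of_nonneg_left (setIntegral_dist_ge_le_of_antisymm hW_anti hxb hmin
      (by linarith [hσ.1]) hε.1 hε.2 (hW_L.integrableOn_sub_div_dist_rpow hσ.1 (W xb) xb hε.1)
      hGminus) hcns.le
  have hJ : 0 < J := setIntegral_one_div_dist_reflPt_rpow_pos hxb hk
  exact ⟨by linarith, hL_le.trans_lt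
    (mul_neg_of_pos_of_neg hcns (mul_neg_of_neg_of_pos (by linarith) hJ))⟩

/-- key pointwise estimate at a negative minimum of an
anti-symmetric function: inequality (2.1)/(d-1). -/
theorem statement5
    (n : ℕ) [NeZero n] (hn : 2 ≤ n)
    (σ : ℝ) (hσ : 0 < σ ∧ σ < 2) (lam : ℝ)
    (cns : ℝ) (hcns : 0 < cns)
    (W : En n → ℝ) (hW_reg : C11loc n W) (hW_L : MemL n σ W)
    (hW_anti : ∀ x, W (reflPt n lam x) = -W x)
    (xb : En n) (hxb : xb ∈ halfSpace n lam)
    (hmin : ∀ y ∈ halfSpace n lam, W xb ≤ W y) (hneg : W xb < 0) :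
    ∀ L, HasFracLap n σ cns W xb L →
      L ≤ 2 * cns * W xb *
        (∫ y in halfSpace n lam, 1 / dist xb (reflPt n lam y) ^ ((n : ℝ) + σ)) ∧
      L < 0 :=
  statement5_general n σ hσ lam cns hcns W hW_L hW_anti xb hxb hmin hneg
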